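/- In the renorming construction: for sufficiently small r > 0, the slice {z ∈ C_ε : f(z) > 1 + ε(1+δ) - r} of the unit ball of (X, |·|_ε) has |·|_ε-diameter at most 2/(1+ε) + 6r(1+δ)/δ. In particular, for r small enough, (X, |·|_ε) has slices of diameter strictly smaller than 2 and fails the r-big slice property. -/

import Mathlib

/-! Every `v ∈ B_δ` satisfies `‖v - (1+δ)x₀‖ ≤ 2(1+δ)/δ · (1+δ - f v)`, because the set of such `v`
is closed, convex and contains `B_X` and `±(1+δ)x₀`. A point `u + εv` of the slice has `f u ≤ 1`,
so `ε(1+δ - f v) < r` and the point lies within norm distance `1 + 2r(1+δ)/δ` of `ε(1+δ)x₀`.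
As `C_ε` contains the ball of radius `1 + ε`, `|·|_ε ≤ ‖·‖/(1+ε)`, so the slice lies in a
`|·|_ε`-ball of radius `(1 + 2r(1+δ)/δ)/(1+ε)`, which is `< 1` once `2r(1+δ)/δ < ε`. -/

open NormedSpace Metric
open scoped Pointwise

/-- `B_δ`: the closed convex hull of `B_X ∪ {(1+δ)x₀} ∪ {-(1+δ)x₀}`. -/
noncomputable def Bdelta {X : Type*} [NormedAddCommGroup X] [NormedSpace ℝ X]
    (x₀ : X) (δ : ℝ) : Set X :=
  closure (convexHull ℝ (Metric.closedBall (0 : X) 1 ∪ {(1 + δ) • x₀, -((1 + δ) • x₀)}))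

/-- `C_ε := B_X + ε B_δ`. -/
noncomputable def Ceps {X : Type*} [NormedAddCommGroup X] [NormedSpace ℝ X]
    (x₀ : X) (δ ε : ℝ) : Set X :=
  Metric.closedBall (0 : X) 1 + ε • Bdelta x₀ δ

section

variable {X : Type*} [NormedAddCommGroup X] [NormedSpace ℝ X]

lemma apply_le_one_of_opNorm_le_one {f : StrongDual ℝ X} (hf : ‖f‖ ≤ 1) {x : X} (hx : ‖x‖ ≤ 1) :
    f x ≤ 1 :=
  calc f x ≤ ‖f x‖ := Real.le_norm_self _
    _ ≤ 1 * ‖x‖ := f.le_of_opNorm_le hf x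
    _ ≤ 1 := by rwa [one_mul]

lemma gauge_sub_le_add {E : Type*} [AddCommGroup E] [Module ℝ E] {s : Set E} (hs : Convex ℝ s)
    (hsa : Absorbent ℝ s) (hsym : ∀ x ∈ s, -x ∈ s) (x y z : E) :
    gauge s (x - z) ≤ gauge s (x - y) + gauge s (z - y) := by
  rw [← gauge_neg hsym (z - y), neg_sub, ← sub_add_sub_cancel x y z]
  exact gauge_add_le hs hsa _ _

lemma isClosed_setOf_norm_sub_add_le (a : X) (g : StrongDual ℝ X) (c : ℝ) :
    IsClosed {v : X | ‖v - a‖ + g v ≤ c} :=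
  isClosed_le (by fun_prop) continuous_const

lemma convex_setOf_norm_sub_add_le (a : X) (g : StrongDual ℝ X) (c : ℝ) :
    Convex ℝ {v : X | ‖v - a‖ + g v ≤ c} := by
  simpa [dist_eq_norm] using
    ((convexOn_dist a convex_univ).add ((g : X →ₗ[ℝ] ℝ).convexOn convex_univ)).convex_le c

variable {x₀ : X} {δ ε : ℝ}

lemma Bdelta_subset {T : Set X} (hTc : IsClosed T) (hTv : Convex ℝ T)
    (hball : closedBall (0 : X) 1 ⊆ T) (hpos : (1 + δ) • x₀ ∈ T) (hneg : -((1 + δ) • x₀) ∈ T) :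
    Bdelta x₀ δ ⊆ T := by
  refine closure_minimal (convexHull_min ?_ hTv) hTc
  rintro v (hv | rfl | rfl)
  exacts [hball hv, hpos, hneg]

lemma closedBall_subset_Bdelta : closedBall (0 : X) 1 ⊆ Bdelta x₀ δ :=
  Set.subset_union_left.trans ((subset_convexHull ℝ _).trans subset_closure)

lemma neg_mem_Bdelta {v : X} (hv : v ∈ Bdelta x₀ δ) : -v ∈ Bdelta x₀ δ := by
  have hgen : -(closedBall (0 : X) 1 ∪ {(1 + δ) • x₀, -((1 + δ) • x₀)}) =
      closedBall (0 : X) 1 ∪ {(1 + δ) • x₀, -((1 + δ) • x₀)} := by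
    rw [Set.union_neg, neg_closedBall, neg_zero, Set.neg_insert, Set.neg_singleton, neg_neg,
      Set.pair_comm]
  refine map_mem_closure continuous_neg hv fun a ha => ?_
  rw [← hgen, convexHull_neg]
  exact Set.neg_mem_neg.2 ha

lemma convex_Bdelta : Convex ℝ (Bdelta x₀ δ) := (convex_convexHull ℝ _).closure

lemma convex_Ceps : Convex ℝ (Ceps x₀ δ ε) :=
  (convex_closedBall _ _).add (convex_Bdelta.smul ε)

lemma neg_mem_Ceps {z : X} (hz : z ∈ Ceps x₀ δ ε) : -z ∈ Ceps x₀ δ ε := by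
  obtain ⟨u, hu, _, ⟨v, hv, rfl⟩, rfl⟩ := hz
  refine ⟨-u, by simpa using hu, ε • -v, Set.smul_mem_smul_set (neg_mem_Bdelta hv), ?_⟩
  rw [smul_neg, neg_add]

lemma closedBall_subset_Ceps (hε : 0 ≤ ε) : closedBall (0 : X) (1 + ε) ⊆ Ceps x₀ δ ε := by
  intro x hx
  have h1ε : 0 < 1 + ε := by linarith
  have hu : (1 + ε)⁻¹ • x ∈ closedBall (0 : X) 1 := by
    rw [mem_closedBall_zero_iff, norm_smul, Real.norm_of_nonneg (inv_nonneg.2 h1ε.le),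
      inv_mul_le_iff₀ h1ε, mul_one]
    exact mem_closedBall_zero_iff.1 hx
  refine ⟨_, hu, ε • ((1 + ε)⁻¹ • x), Set.smul_mem_smul_set (closedBall_subset_Bdelta hu), ?_⟩
  change (1 + ε)⁻¹ • x + ε • (1 + ε)⁻¹ • x = x
  rw [smul_smul, ← add_smul, ← one_add_mul, mul_inv_cancel₀ h1ε.ne', one_smul]

lemma absorbent_Ceps (hε : 0 ≤ ε) : Absorbent ℝ (Ceps x₀ δ ε) :=
  absorbent_nhds_zero <| Filter.mem_of_superset (closedBall_mem_nhds _ (by linarith))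
    (closedBall_subset_Ceps hε)

lemma gauge_Ceps_le (hε : 0 ≤ ε) (x : X) : gauge (Ceps x₀ δ ε) x ≤ ‖x‖ / (1 + ε) := by
  have h1ε : 0 < 1 + ε := by linarith
  rw [← gauge_ball h1ε.le]
  exact gauge_mono (absorbent_ball_zero h1ε)
    (ball_subset_closedBall.trans (closedBall_subset_Ceps hε)) x

lemma norm_sub_le_of_mem_Bdelta (hδ : 0 < δ) (hx₀ : ‖x₀‖ ≤ 1) {f : StrongDual ℝ X}
    (hf : ‖f‖ ≤ 1) (hfx₀ : f x₀ = 1) {v : X} (hv : v ∈ Bdelta x₀ δ) :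
    ‖v - (1 + δ) • x₀‖ ≤ 2 * (1 + δ) / δ * (1 + δ - f v) := by
  set K := 2 * (1 + δ) / δ
  have hKδ : K * δ = 2 * (1 + δ) := div_mul_cancel₀ _ hδ.ne'
  have hK : 1 ≤ K := by nlinarith
  suffices v ∈ {v : X | ‖v - (1 + δ) • x₀‖ + (K • f) v ≤ K * (1 + δ)} by
    simp only [Set.mem_ofPred_eq, smul_apply, smul_eq_mul] at this
    linarith
  refine Bdelta_subset (isClosed_setOf_norm_sub_add_le _ _ _)
    (convex_setOf_norm_sub_add_le _ _ _) (fun w hw => ?_) ?_ ?_ hv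
  · rw [mem_closedBall_zero_iff] at hw
    have hfw := apply_le_one_of_opNorm_le_one hf hw
    have hdist : ‖w - (1 + δ) • x₀‖ ≤ 1 + (1 + δ) := by
      refine (norm_sub_le _ _).trans (add_le_add hw ?_)
      rw [norm_smul, Real.norm_of_nonneg (by linarith)]
      nlinarith [norm_nonneg x₀]
    simp only [Set.mem_ofPred_eq, smul_apply, smul_eq_mul]
    nlinarith
  · simp [hfx₀]
  · have hnorm : ‖-((1 + δ) • x₀) - (1 + δ) • x₀‖ = 2 * (1 + δ) * ‖x₀‖ := by
      rw [← neg_add', ← two_smul ℝ, norm_neg, smul_smul, norm_smul,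
        Real.norm_of_nonneg (by linarith)]
    simp only [Set.mem_ofPred_eq, smul_apply, smul_eq_mul, map_neg, map_smul,
      hfx₀, hnorm]
    nlinarith

lemma norm_sub_le_of_mem_Ceps (hδ : 0 < δ) (hε : 0 ≤ ε) (hx₀ : ‖x₀‖ ≤ 1)
    {f : StrongDual ℝ X} (hf : ‖f‖ ≤ 1) (hfx₀ : f x₀ = 1) {r : ℝ} {z : X}
    (hz : z ∈ Ceps x₀ δ ε) (hfz : 1 + ε * (1 + δ) - r < f z) :
    ‖z - (ε * (1 + δ)) • x₀‖ ≤ 1 + 2 * r * (1 + δ) / δ := by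
  obtain ⟨u, hu, _, ⟨v, hv, rfl⟩, rfl⟩ := hz
  rw [mem_closedBall_zero_iff] at hu
  have hfu := apply_le_one_of_opNorm_le_one hf hu
  have hgap : ε * (1 + δ - f v) ≤ r := by
    simp only [map_add, map_smul, smul_eq_mul] at hfz
    linarith
  have hv_near := norm_sub_le_of_mem_Bdelta hδ hx₀ hf hfx₀ hv
  calc ‖u + ε • v - (ε * (1 + δ)) • x₀‖ = ‖u + ε • (v - (1 + δ) • x₀)‖ := by
        rw [smul_sub, smul_smul, add_sub_assoc]
    _ ≤ ‖u‖ + ε * ‖v - (1 + δ) • x₀‖ :=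
        (norm_add_le _ _).trans_eq (by rw [norm_smul, Real.norm_of_nonneg hε])
    _ ≤ 1 + ε * (2 * (1 + δ) / δ * (1 + δ - f v)) := by gcongr
    _ = 1 + 2 * (1 + δ) / δ * (ε * (1 + δ - f v)) := by ring
    _ ≤ 1 + 2 * (1 + δ) / δ * r := by gcongr
    _ = 1 + 2 * r * (1 + δ) / δ := by ring

end

theorem slice_of_Ceps_small_diam_general
    (X : Type*) [NormedAddCommGroup X] [NormedSpace ℝ X]
    (x₀ : X) (hx₀ : ‖x₀‖ = 1) (f : StrongDual ℝ X) (hf : ‖f‖ = 1) (hfx₀ : f x₀ = 1)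
    (δ ε : ℝ) (hδ : 0 < δ) (hε : 0 < ε) :
    ∃ r₀ > 0, ∀ r : ℝ, 0 < r → r < r₀ →
      (∀ z ∈ {z ∈ Ceps x₀ δ ε | f z > 1 + ε * (1 + δ) - r},
       ∀ w ∈ {z ∈ Ceps x₀ δ ε | f z > 1 + ε * (1 + δ) - r},
        gauge (Ceps x₀ δ ε) (z - w) ≤ 2 / (1 + ε) + 6 * r * (1 + δ) / δ) ∧
      (∃ d : ℝ, d < 2 ∧
        ∀ z ∈ {z ∈ Ceps x₀ δ ε | f z > 1 + ε * (1 + δ) - r},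
        ∀ w ∈ {z ∈ Ceps x₀ δ ε | f z > 1 + ε * (1 + δ) - r},
          gauge (Ceps x₀ δ ε) (z - w) ≤ d) ∧
      (∃ (y : X) (ρ : ℝ), ρ < 1 ∧
        ∀ z ∈ {z ∈ Ceps x₀ δ ε | f z > 1 + ε * (1 + δ) - r},
          gauge (Ceps x₀ δ ε) (z - y) ≤ ρ) := by
  refine ⟨ε * δ / (2 * (1 + δ)), by positivity, fun r hr hr₀ => ?_⟩
  set S := {z ∈ Ceps x₀ δ ε | f z > 1 + ε * (1 + δ) - r}
  set A := 2 * r * (1 + δ) / δ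
  set ρ := (1 + A) / (1 + ε)
  have hA : A < ε := by
    rw [lt_div_iff₀ (by positivity)] at hr₀
    rw [div_lt_iff₀ hδ]
    linarith
  have hcenter : ∀ z ∈ S, gauge (Ceps x₀ δ ε) (z - (ε * (1 + δ)) • x₀) ≤ ρ := fun z ⟨hz, hfz⟩ =>
    (gauge_Ceps_le hε.le _).trans <| div_le_div_of_nonneg_right
      (norm_sub_le_of_mem_Ceps hδ hε.le hx₀.le hf.le hfx₀ hz hfz) (by linarith)
  have hdiam : ∀ z ∈ S, ∀ w ∈ S, gauge (Ceps x₀ δ ε) (z - w) ≤ 2 * ρ := fun z hz w hw =>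
    (gauge_sub_le_add convex_Ceps (absorbent_Ceps hε.le) (fun _ => neg_mem_Ceps) z _ w).trans
      (by linarith [hcenter z hz, hcenter w hw])
  have hρ : ρ < 1 := (div_lt_one (by linarith)).2 (by linarith)
  have h2ρ : 2 * ρ ≤ 2 / (1 + ε) + 6 * r * (1 + δ) / δ :=
    calc 2 * ρ = 2 / (1 + ε) + 2 * (A / (1 + ε)) := by ring
      _ ≤ 2 / (1 + ε) + 2 * A := by gcongr; exact div_le_self (by positivity) (by linarith)
      _ ≤ 2 / (1 + ε) + 6 * r * (1 + δ) / δ := by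
        have : 0 ≤ A := by positivity
        linarith [show 6 * r * (1 + δ) / δ = 3 * A by ring]
  exact ⟨fun z hz w hw => (hdiam z hz w hw).trans h2ρ, ⟨2 * ρ, by linarith, hdiam⟩,
    ⟨_, ρ, hρ, hcenter⟩⟩

/-- In the renorming construction (`C_ε = B_X + εB_δ`, `|·|_ε = gauge C_ε`):
for all sufficiently small `r > 0`, the slice `{z ∈ C_ε : f z > 1 + ε(1+δ) - r}` of the
unit ball of `(X, |·|_ε)` has `|·|_ε`-diameter at most `2/(1+ε) + 6r(1+δ)/δ`; in
particular, for `r` small enough, `(X, |·|_ε)` has slices of diameter strictly smaller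
than `2`, and fails the r-big slice property (the slice lies in a `|·|_ε`-ball of radius
strictly smaller than `1`). -/
theorem slice_of_Ceps_small_diam
    (X : Type*) [NormedAddCommGroup X] [NormedSpace ℝ X] [CompleteSpace X]
    (x₀ : X) (hx₀ : ‖x₀‖ = 1) (f : StrongDual ℝ X) (hf : ‖f‖ = 1) (hfx₀ : f x₀ = 1)
    (δ ε : ℝ) (hδ : 0 < δ) (hε : 0 < ε) :
    ∃ r₀ > 0, ∀ r : ℝ, 0 < r → r < r₀ →
      (∀ z ∈ {z ∈ Ceps x₀ δ ε | f z > 1 + ε * (1 + δ) - r},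
       ∀ w ∈ {z ∈ Ceps x₀ δ ε | f z > 1 + ε * (1 + δ) - r},
        gauge (Ceps x₀ δ ε) (z - w) ≤ 2 / (1 + ε) + 6 * r * (1 + δ) / δ) ∧
      (∃ d : ℝ, d < 2 ∧
        ∀ z ∈ {z ∈ Ceps x₀ δ ε | f z > 1 + ε * (1 + δ) - r},
        ∀ w ∈ {z ∈ Ceps x₀ δ ε | f z > 1 + ε * (1 + δ) - r},
          gauge (Ceps x₀ δ ε) (z - w) ≤ d) ∧
      (∃ (y : X) (ρ : ℝ), ρ < 1 ∧
        ∀ z ∈ {z ∈ Ceps x₀ δ ε | f z > 1 + ε * (1 + δ) - r},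
          gauge (Ceps x₀ δ ε) (z - y) ≤ ρ) :=
  slice_of_Ceps_small_diam_general X x₀ hx₀ f hf hfx₀ δ ε hδ hε
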